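/- Let F(S) be the free group on a set S, and let U be the free product of copies of Z/2Z indexed by S (the universal Coxeter group). Define φ from the free involutory quandle D(S^U) to the core quandle Core(F(S)) by sending the left-associated product x_n * x_{n-1} * ... * x_1 (with x_i ∈ S, x_i ≠ x_{i+1}) to x_1^{d_1} x_2^{d_2} ... x_n^{d_n} ... x_2^{d_2} x_1^{d_1}, where d_i = (-1)^{i+1}. Then φ is an injective quandle homomorphism. -/

import Mathlib

/-- The set of all conjugates of elements of `S` in `G`. -/
def conjSet (G : Type*) [Group G] (S : Set G) : Set G :=
  {x | ∃ s ∈ S, ∃ g : G, x = g * s * g⁻¹}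

theorem conjSet.conj_mem {G : Type*} [Group G] {S : Set G} {x : G}
    (hx : x ∈ conjSet G S) (g : G) : g * x * g⁻¹ ∈ conjSet G S := by
  obtain ⟨s, hs, h, rfl⟩ := hx
  exact ⟨s, hs, g * h, by group⟩

/-- The Dehn quandle operation `x * y = y x y⁻¹` on the set of conjugates of `S`. -/
def dehnOp {G : Type*} [Group G] {S : Set G} (x y : conjSet G S) : conjSet G S :=
  ⟨(y : G) * (x : G) * (y : G)⁻¹, conjSet.conj_mem x.2 (y : G)⟩

/-- The universal Coxeter group on `S`: the free product of copies of `ℤ/2` indexed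
by `S`, presented by the relations `s² = 1`. -/
abbrev UCox (S : Type*) : Type _ :=
  PresentedGroup {r : FreeGroup S | ∃ s : S, r = (FreeGroup.of s) ^ 2}

theorem UCox.of_mem_conjSet {S : Type*} (s : S) :
    (PresentedGroup.of s : UCox S) ∈
      conjSet (UCox S) (Set.range (PresentedGroup.of : S → UCox S)) :=
  ⟨PresentedGroup.of s, ⟨s, rfl⟩, 1, by group⟩

/-!
The universal Coxeter group `U` acts on any group `G` once each generator `s` is assigned an
element `f s`: let `s` act by the point reflection `w ↦ f s * w⁻¹ * f s` of the core quandle of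
`G`, which is an involution. For `G = F(S)` and `f = of`, the action of a reflection `g s g⁻¹` of
`U` is again a point reflection, namely at `g • s`; since `F(S)` has no 2-torsion, a point
reflection determines its centre, so `φ(x)` can be defined as the centre of the action of `x`.
This makes `φ` a quandle homomorphism, and it is injective because the quotient map
`F(S) → U` intertwines the actions on `F(S)` and on `U` and sends `g • s` back to `g s g⁻¹`.
-/

section CoreSymm

variable {G : Type*} [Group G]

def coreSymm (a : G) : Equiv.Perm G :=
  Function.Involutive.toPerm (fun w => a * w⁻¹ * a) fun w => by group

@[simp]
theorem coreSymm_apply (a w : G) : coreSymm a w = a * w⁻¹ * a := rfl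

theorem coreSymm_mul_self (a : G) : coreSymm a * coreSymm a = 1 := by
  ext w
  simp only [Equiv.Perm.mul_apply, coreSymm_apply, Equiv.Perm.one_apply]
  group

theorem coreSymm_injective [IsMulTorsionFree G] :
    Function.Injective (coreSymm : G → Equiv.Perm G) := by
  intro a b hab
  have hfix : a = b * a⁻¹ * b := by simpa using congrArg (· a) hab
  have hsq : (a * b⁻¹) ^ 2 = 1 := by
    calc (a * b⁻¹) ^ 2 = a * b⁻¹ * a * b⁻¹ := by simp only [sq, mul_assoc]
      _ = b * a⁻¹ * b * b⁻¹ * a * b⁻¹ := by rw [← hfix]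
      _ = 1 := by group
  exact mul_inv_eq_one.mp (sq_eq_one.mp hsq)

end CoreSymm

namespace UCox

variable {S : Type*}

theorem of_mul_self (s : S) : (PresentedGroup.of s : UCox S) * PresentedGroup.of s = 1 := by
  rw [← sq]
  exact PresentedGroup.one_of_mem ⟨s, rfl⟩

theorem of_inv (s : S) : (PresentedGroup.of s : UCox S)⁻¹ = PresentedGroup.of s :=
  inv_eq_of_mul_eq_one_right (of_mul_self s)

theorem induction_on {C : UCox S → Prop} (g : UCox S) (one : C 1)
    (of : ∀ s, C (PresentedGroup.of s)) (mul : ∀ a b, C a → C b → C (a * b)) : C g := by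
  induction g using PresentedGroup.induction_on with
  | H z =>
    induction z using FreeGroup.induction_on with
    | C1 => exact one
    | of s => exact of s
    | inv_of s _ =>
      change C (PresentedGroup.of s)⁻¹
      rw [of_inv]
      exact of s
    | mul x y hx hy => simpa only [map_mul] using mul _ _ hx hy

variable {G H : Type*} [Group G] [Group H]

noncomputable def coreAction (f : S → G) : UCox S →* Equiv.Perm G :=
  PresentedGroup.toGroup (f := fun s => coreSymm (f s)) <| by
    rintro r ⟨s, rfl⟩
    rw [map_pow, FreeGroup.lift_apply_of, sq, coreSymm_mul_self]

@[simp]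
theorem coreAction_of (f : S → G) (s : S) :
    coreAction f (PresentedGroup.of s) = coreSymm (f s) :=
  PresentedGroup.toGroup.of _

theorem coreAction_mul_coreSymm (f : S → G) (g : UCox S) (a : G) :
    coreAction f g * coreSymm a = coreSymm (coreAction f g a) * coreAction f g := by
  induction g using UCox.induction_on generalizing a with
  | one => simp
  | of s =>
    ext w
    simp only [Equiv.Perm.mul_apply, coreAction_of, coreSymm_apply]
    group
  | mul x y hx hy =>
    rw [map_mul, mul_assoc, hy, ← mul_assoc, hx, mul_assoc, Equiv.Perm.mul_apply]

theorem coreAction_conj (f : S → G) (g : UCox S) (s : S) :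
    coreAction f (g * PresentedGroup.of s * g⁻¹) = coreSymm (coreAction f g (f s)) := by
  rw [map_mul, map_mul, coreAction_of, coreAction_mul_coreSymm, map_inv, mul_inv_cancel_right]

theorem map_coreAction_apply (φ : G →* H) (f : S → G) (g : UCox S) (w : G) :
    φ (coreAction f g w) = coreAction (φ ∘ f) g (φ w) := by
  induction g using UCox.induction_on generalizing w with
  | one => rfl
  | of s => simp
  | mul x y hx hy => simp only [map_mul, Equiv.Perm.mul_apply, hx, hy]

theorem coreAction_of_apply (g v : UCox S) (hv : v⁻¹ = v) :
    coreAction PresentedGroup.of g v = g * v * g⁻¹ := by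
  induction g using UCox.induction_on generalizing v with
  | one => simp
  | of s => simp [hv, of_inv]
  | mul x y hx hy =>
    rw [map_mul, Equiv.Perm.mul_apply, hy v hv, hx _ (by simp [hv, mul_assoc])]
    group

abbrev Reflection (S : Type*) : Type _ :=
  conjSet (UCox S) (Set.range (PresentedGroup.of : S → UCox S))

theorem exists_coreAction_eq_coreSymm (x : Reflection S) :
    ∃ a : FreeGroup S, coreAction FreeGroup.of (x : UCox S) = coreSymm a := by
  obtain ⟨x, _, ⟨s, rfl⟩, g, rfl⟩ := x
  exact ⟨_, coreAction_conj FreeGroup.of g s⟩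

noncomputable def toCore (x : Reflection S) : FreeGroup S :=
  (exists_coreAction_eq_coreSymm x).choose

theorem coreAction_eq_coreSymm_toCore (x : Reflection S) :
    coreAction FreeGroup.of (x : UCox S) = coreSymm (toCore x) :=
  (exists_coreAction_eq_coreSymm x).choose_spec

theorem toCore_eq_of_coreAction_eq {x : Reflection S} {a : FreeGroup S}
    (h : coreAction FreeGroup.of (x : UCox S) = coreSymm a) : toCore x = a :=
  coreSymm_injective ((coreAction_eq_coreSymm_toCore x).symm.trans h)

theorem mk_toCore (x : Reflection S) : PresentedGroup.mk _ (toCore x) = (x : UCox S) := by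
  obtain ⟨x, _, ⟨s, rfl⟩, g, rfl⟩ := x
  rw [toCore_eq_of_coreAction_eq (coreAction_conj FreeGroup.of g s), map_coreAction_apply]
  exact coreAction_of_apply g _ (of_inv s)

theorem toCore_injective : Function.Injective (toCore : Reflection S → FreeGroup S) :=
  fun x y h => Subtype.ext <| by rw [← mk_toCore x, ← mk_toCore y, h]

theorem toCore_of (s : S) :
    toCore ⟨PresentedGroup.of s, of_mem_conjSet s⟩ = FreeGroup.of s :=
  toCore_eq_of_coreAction_eq (coreAction_of FreeGroup.of s)

theorem toCore_dehnOp (x y : Reflection S) :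
    toCore (dehnOp x y) = toCore y * (toCore x)⁻¹ * toCore y := by
  apply toCore_eq_of_coreAction_eq
  rw [dehnOp, map_mul, map_mul, coreAction_eq_coreSymm_toCore x, coreAction_mul_coreSymm,
    map_inv, mul_inv_cancel_right, coreAction_eq_coreSymm_toCore y, coreSymm_apply]

end UCox

/-- The map `φ` from the free involutory quandle `D(S^U)` on `S` (the Dehn quandle of the
universal Coxeter group `U` with respect to its generators) to the core quandle
`Core(F(S))` of the free group on `S`, determined by sending each generator `s` to `s`
and intertwining the quandle operations (`Core` operation: `a * b = b a⁻¹ b`), is an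
injective quandle homomorphism. -/
theorem free_involutory_quandle_embeds_core (S : Type*) :
    ∃ φ : conjSet (UCox S) (Set.range (PresentedGroup.of : S → UCox S)) → FreeGroup S,
      Function.Injective φ ∧
      (∀ s : S, φ ⟨PresentedGroup.of s, UCox.of_mem_conjSet s⟩ = FreeGroup.of s) ∧
      (∀ x y : conjSet (UCox S) (Set.range (PresentedGroup.of : S → UCox S)),
        φ (dehnOp x y) = φ y * (φ x)⁻¹ * φ y) :=
  ⟨UCox.toCore, UCox.toCore_injective, UCox.toCore_of, UCox.toCore_dehnOp⟩
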